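/- Let f₁, f₂ : ℝ^d → ℝ be differentiable with curvatures in [μ₁, L₁] and [μ₂, L₂] respectively, where L₂ > μ₁ ≥ μ₂ ≥ 0, μ₁ + μ₂ > 0, μ₁ < L₁. Let x⁰, x¹, …, x^{N+1} be generated by DCA, i.e., ∇f₁(x^{k+1}) = ∇f₂(x^k) for k = 0, …, N, with N ≥ 1. Then (1/2)·min_{0 ≤ k ≤ N} ‖x^k − x^{k+1}‖² ≤ (F(x⁰) − F(x^{N+1})) / ((μ₁+μ₂) + (μ₁ + μ₂ + (μ₁−μ₂)²/(L₂−μ₂))·N), where F = f₁ − f₂. -/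

import Mathlib

/-!
Write `F = f₁ - f₂` and `g_k = ∇f₂(x_{k+1}) - ∇f₂(x_k) - μ₂ (x_{k+1} - x_k)`. Strong convexity of
`f₁`, together with the interpolation inequality for functions of curvature in `[μ₂, L₂]` applied
to `f₂`, shows that a DCA step decreases `F` by at least
`(μ₁ + μ₂)/2 ‖x_k - x_{k+1}‖² + ‖g_k‖² / (2 (L₂ - μ₂))`.
Strong monotonicity of `∇f₁`, combined with `∇f₁(x_{k+2}) - ∇f₁(x_{k+1}) = ∇f₂(x_{k+1}) - ∇f₂(x_k)`,
gives `μ₁ ‖x_{k+1} - x_{k+2}‖ - μ₂ ‖x_k - x_{k+1}‖ ≤ ‖g_k‖`. So if both steps have length at least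
`s`, the term `‖g_k‖²` pays for an extra `(μ₁ - μ₂)² s² / (2 (L₂ - μ₂))`. Each of the first `N`
steps has a successor and gets this improved bound, the last one the plain one; telescoping
with `s²` the smallest squared step length gives the claim.
-/

open Set
open scoped Gradient RealInnerProductSpace

variable {E : Type*} [NormedAddCommGroup E] [InnerProductSpace ℝ E]

lemma norm_sq_eq_add_two_inner_add_norm_sub_sq (x y : E) :
    ‖y‖ ^ 2 = ‖x‖ ^ 2 + 2 * ⟪x, y - x⟫ + ‖y - x‖ ^ 2 := by
  simpa using norm_add_sq_real x (y - x)

variable [CompleteSpace E] {f : E → ℝ} {x : E}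

lemma ConvexOn.add_inner_gradient_le (hc : ConvexOn ℝ univ f) (hf : DifferentiableAt ℝ f x)
    (y : E) : f x + ⟪∇ f x, y - x⟫ ≤ f y := by
  let ℓ : ℝ →ᵃ[ℝ] E := AffineMap.lineMap x y
  have hℓ : HasDerivAt (f ∘ ℓ) (fderiv ℝ f x (y - x)) 0 :=
    hf.hasFDerivAt.comp_hasDerivAt_of_eq 0 AffineMap.hasDerivAt_lineMap (by simp [ℓ])
  have h := (hc.comp_affineMap ℓ).le_slope_of_hasDerivAt (mem_univ 0) (mem_univ 1) one_pos hℓ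
  simp only [slope_def_field, Function.comp_apply, ℓ, AffineMap.lineMap_apply_zero,
    AffineMap.lineMap_apply_one, sub_zero, div_one] at h
  rw [inner_gradient_left]
  linarith

lemma hasGradientAt_half_mul_norm_sq (c : ℝ) (x : E) :
    HasGradientAt (fun z => c / 2 * ‖z‖ ^ 2) (c • x) x := by
  rw [hasGradientAt_iff_hasFDerivAt]
  refine ((hasStrictFDerivAt_norm_sq x).hasFDerivAt.const_mul (c / 2)).congr_fderiv ?_
  ext v
  simp
  ring

lemma gradient_sub_half_mul_norm_sq (hf : DifferentiableAt ℝ f x) (c : ℝ) :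
    ∇ (fun z => f z - c / 2 * ‖z‖ ^ 2) x = ∇ f x - c • x := by
  apply HasGradientAt.gradient
  rw [hasGradientAt_iff_hasFDerivAt, map_sub]
  exact hf.hasGradientAt.hasFDerivAt.sub (hasGradientAt_half_mul_norm_sq c x).hasFDerivAt

lemma DifferentiableAt.sub_half_mul_norm_sq (hf : DifferentiableAt ℝ f x) (c : ℝ) :
    DifferentiableAt ℝ (fun z => f z - c / 2 * ‖z‖ ^ 2) x :=
  hf.sub (hasGradientAt_half_mul_norm_sq c x).differentiableAt

lemma add_inner_gradient_add_half_mul_norm_sq_le {μ : ℝ} (hf : DifferentiableAt ℝ f x)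
    (hμ : ConvexOn ℝ univ (fun z => f z - μ / 2 * ‖z‖ ^ 2)) (y : E) :
    f x + ⟪∇ f x, y - x⟫ + μ / 2 * ‖y - x‖ ^ 2 ≤ f y := by
  have h := hμ.add_inner_gradient_le (hf.sub_half_mul_norm_sq μ) y
  rw [gradient_sub_half_mul_norm_sq hf, inner_sub_left, real_inner_smul_left] at h
  linear_combination h - μ / 2 * norm_sq_eq_add_two_inner_add_norm_sub_sq x y

lemma le_add_inner_gradient_add_half_mul_norm_sq {L : ℝ} (hf : DifferentiableAt ℝ f x)
    (hL : ConvexOn ℝ univ (fun z => L / 2 * ‖z‖ ^ 2 - f z)) (y : E) :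
    f y ≤ f x + ⟪∇ f x, y - x⟫ + L / 2 * ‖y - x‖ ^ 2 := by
  have hneg : ∇ (-f) x = -∇ f x :=
    (hasGradientAt_iff_hasFDerivAt.2 (by simpa using hf.hasFDerivAt.neg)).gradient
  have h := add_inner_gradient_add_half_mul_norm_sq_le (f := -f) (μ := -L) hf.neg
    (by convert hL using 2; simp only [Pi.neg_apply]; ring) y
  rw [hneg, inner_neg_left] at h
  simp only [Pi.neg_apply] at h
  linarith

lemma ConvexOn.add_inner_gradient_add_norm_sq_div_le {L : ℝ} (hL0 : 0 < L)
    (hc : ConvexOn ℝ univ f) (hL : ConvexOn ℝ univ (fun z => L / 2 * ‖z‖ ^ 2 - f z))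
    {y : E} (hfx : DifferentiableAt ℝ f x) (hfy : DifferentiableAt ℝ f y) :
    f x + ⟪∇ f x, y - x⟫ + ‖∇ f y - ∇ f x‖ ^ 2 / (2 * L) ≤ f y := by
  set d := ∇ f y - ∇ f x
  -- test the convexity at `x` and the smoothness at `y` against a gradient step from `y`
  set z := y - L⁻¹ • d
  have hlow := hc.add_inner_gradient_le hfx z
  have hup := le_add_inner_gradient_add_half_mul_norm_sq hfy hL z
  have hzx : z - x = (y - x) - L⁻¹ • d := by simp only [z]; abel
  have hzy : z - y = -(L⁻¹ • d) := by simp only [z]; abel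
  have hd : ⟪∇ f y, d⟫ - ⟪∇ f x, d⟫ = ‖d‖ ^ 2 := by
    rw [← inner_sub_left, real_inner_self_eq_norm_sq]
  rw [hzx, inner_sub_right, real_inner_smul_right] at hlow
  rw [hzy, inner_neg_right, real_inner_smul_right, norm_neg, norm_smul, Real.norm_eq_abs,
    abs_inv, abs_of_pos hL0] at hup
  have hquad : ‖d‖ ^ 2 / (2 * L) = L⁻¹ * ‖d‖ ^ 2 - L / 2 * (L⁻¹ * ‖d‖) ^ 2 := by
    field_simp; ring
  linear_combination hlow + hup - L⁻¹ * hd + hquad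

lemma add_inner_gradient_add_half_mul_norm_sq_add_norm_sq_div_le {μ L : ℝ} (hμL : μ < L)
    (hμ : ConvexOn ℝ univ (fun z => f z - μ / 2 * ‖z‖ ^ 2))
    (hL : ConvexOn ℝ univ (fun z => L / 2 * ‖z‖ ^ 2 - f z))
    {y : E} (hfx : DifferentiableAt ℝ f x) (hfy : DifferentiableAt ℝ f y) :
    f x + ⟪∇ f x, y - x⟫ + μ / 2 * ‖y - x‖ ^ 2
      + ‖∇ f y - ∇ f x - μ • (y - x)‖ ^ 2 / (2 * (L - μ)) ≤ f y := by
  have hL' : ConvexOn ℝ univ (fun z => (L - μ) / 2 * ‖z‖ ^ 2 - (f z - μ / 2 * ‖z‖ ^ 2)) := by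
    convert hL using 2; ring
  have h := hμ.add_inner_gradient_add_norm_sq_div_le (sub_pos.2 hμL) hL'
    (hfx.sub_half_mul_norm_sq μ) (hfy.sub_half_mul_norm_sq μ)
  rw [gradient_sub_half_mul_norm_sq hfx, gradient_sub_half_mul_norm_sq hfy,
    inner_sub_left, real_inner_smul_left,
    show ∇ f y - μ • y - (∇ f x - μ • x) = ∇ f y - ∇ f x - μ • (y - x) by
      rw [smul_sub]; abel] at h
  linear_combination h - μ / 2 * norm_sq_eq_add_two_inner_add_norm_sub_sq x y

lemma mul_norm_sub_sq_le_inner_gradient_sub {μ : ℝ}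
    (hμ : ConvexOn ℝ univ (fun z => f z - μ / 2 * ‖z‖ ^ 2))
    {y : E} (hfx : DifferentiableAt ℝ f x) (hfy : DifferentiableAt ℝ f y) :
    μ * ‖y - x‖ ^ 2 ≤ ⟪∇ f y - ∇ f x, y - x⟫ := by
  have hxy := add_inner_gradient_add_half_mul_norm_sq_le hfx hμ y
  have hyx := add_inner_gradient_add_half_mul_norm_sq_le hfy hμ x
  rw [← neg_sub y x, inner_neg_right, norm_neg] at hyx
  rw [inner_sub_left]
  linarith

lemma sq_mul_sq_le_of_mul_sub_mul_le {μ₁ μ₂ L s a T : ℝ} (hμ₂ : 0 ≤ μ₂) (hμ : μ₂ ≤ μ₁)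
    (hL : μ₁ ≤ L) (hs : 0 ≤ s) (hsa : s ≤ a) (hT : 0 ≤ T) (h : μ₁ * s - μ₂ * a ≤ T) :
    (μ₁ - μ₂) ^ 2 * s ^ 2 ≤ (μ₁ + μ₂) * (L - μ₂) * (a ^ 2 - s ^ 2) + T ^ 2 := by
  have hrest : 0 ≤ (μ₁ + μ₂) * (L - μ₂) * (a ^ 2 - s ^ 2) := by
    have : s ^ 2 ≤ a ^ 2 := pow_le_pow_left₀ hs hsa 2
    exact mul_nonneg (mul_nonneg (by linarith) (by linarith)) (by linarith)
  rcases le_total ((μ₁ - μ₂) * s) T with hle | hlt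
  · nlinarith [pow_le_pow_left₀ (mul_nonneg (sub_nonneg.2 hμ) hs) hle 2]
  · have h1 : (μ₁ - μ₂) * s - T ≤ μ₂ * (a - s) := by linarith
    have h2 : (μ₁ - μ₂) * s + T ≤ 2 * ((μ₁ - μ₂) * s) := by linarith
    have h3 : 0 ≤ (μ₁ - μ₂) * s - T := by linarith
    calc (μ₁ - μ₂) ^ 2 * s ^ 2
        = ((μ₁ - μ₂) * s - T) * ((μ₁ - μ₂) * s + T) + T ^ 2 := by ring
      _ ≤ (μ₂ * (a - s)) * (2 * ((μ₁ - μ₂) * s)) + T ^ 2 := by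
        gcongr
      _ ≤ ((μ₁ + μ₂) * (a - s)) * ((L - μ₂) * (a + s)) + T ^ 2 := by
        have hμa : μ₂ * (a - s) ≤ (μ₁ + μ₂) * (a - s) :=
          mul_le_mul_of_nonneg_right (by linarith) (by linarith)
        have hLs : 2 * ((μ₁ - μ₂) * s) ≤ (L - μ₂) * (a + s) := by nlinarith
        gcongr
        linarith
      _ = (μ₁ + μ₂) * (L - μ₂) * (a ^ 2 - s ^ 2) + T ^ 2 := by ring

section DCA

variable {f₁ f₂ : E → ℝ} {μ₁ μ₂ L₂ : ℝ}

lemma dca_step_decrease (hf₁ : Differentiable ℝ f₁) (hf₂ : Differentiable ℝ f₂)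
    (hcμ₁ : ConvexOn ℝ univ (fun z => f₁ z - μ₁ / 2 * ‖z‖ ^ 2))
    (hcμ₂ : ConvexOn ℝ univ (fun z => f₂ z - μ₂ / 2 * ‖z‖ ^ 2))
    (hcL₂ : ConvexOn ℝ univ (fun z => L₂ / 2 * ‖z‖ ^ 2 - f₂ z)) (hμL : μ₂ < L₂)
    {x x' : E} (hstep : ∇ f₁ x' = ∇ f₂ x) :
    (μ₁ + μ₂) / 2 * ‖x - x'‖ ^ 2 + ‖∇ f₂ x' - ∇ f₂ x - μ₂ • (x' - x)‖ ^ 2 / (2 * (L₂ - μ₂))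
      ≤ (f₁ x - f₂ x) - (f₁ x' - f₂ x') := by
  have h₁ := add_inner_gradient_add_half_mul_norm_sq_le (hf₁ x') hcμ₁ x
  have h₂ := add_inner_gradient_add_half_mul_norm_sq_add_norm_sq_div_le hμL hcμ₂ hcL₂ (hf₂ x)
    (hf₂ x')
  rw [hstep, ← neg_sub x' x, inner_neg_right, norm_neg] at h₁
  rw [norm_sub_rev x x']
  linarith

lemma dca_two_step_bound (hf₁ : Differentiable ℝ f₁)
    (hcμ₁ : ConvexOn ℝ univ (fun z => f₁ z - μ₁ / 2 * ‖z‖ ^ 2)) (hμ₂ : 0 ≤ μ₂)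
    {x₀ x₁ x₂ : E} (h₀₁ : ∇ f₁ x₁ = ∇ f₂ x₀) (h₁₂ : ∇ f₁ x₂ = ∇ f₂ x₁) :
    μ₁ * ‖x₁ - x₂‖ - μ₂ * ‖x₀ - x₁‖ ≤ ‖∇ f₂ x₁ - ∇ f₂ x₀ - μ₂ • (x₁ - x₀)‖ := by
  set T := ∇ f₂ x₁ - ∇ f₂ x₀ - μ₂ • (x₁ - x₀)
  set w := x₂ - x₁
  have hmono := mul_norm_sub_sq_le_inner_gradient_sub hcμ₁ (hf₁ x₁) (hf₁ x₂)
  rw [h₀₁, h₁₂, show ∇ f₂ x₁ - ∇ f₂ x₀ = T + μ₂ • (x₁ - x₀) by simp [T], inner_add_left,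
    real_inner_smul_left] at hmono
  have hT := real_inner_le_norm T w
  have hx := mul_le_mul_of_nonneg_left (real_inner_le_norm (x₁ - x₀) w) hμ₂
  rw [norm_sub_rev x₁ x₂, norm_sub_rev x₀ x₁]
  rcases (norm_nonneg w).eq_or_lt with hw | hw
  · rw [← hw]
    nlinarith [norm_nonneg T, norm_nonneg (x₁ - x₀)]
  · refine le_of_mul_le_mul_right ?_ hw
    nlinarith

lemma dca_two_step_decrease (hf₁ : Differentiable ℝ f₁) (hf₂ : Differentiable ℝ f₂)
    (hcμ₁ : ConvexOn ℝ univ (fun z => f₁ z - μ₁ / 2 * ‖z‖ ^ 2))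
    (hcμ₂ : ConvexOn ℝ univ (fun z => f₂ z - μ₂ / 2 * ‖z‖ ^ 2))
    (hcL₂ : ConvexOn ℝ univ (fun z => L₂ / 2 * ‖z‖ ^ 2 - f₂ z))
    (hμ₂ : 0 ≤ μ₂) (hμ : μ₂ ≤ μ₁) (hμL : μ₁ < L₂)
    {x₀ x₁ x₂ : E} (h₀₁ : ∇ f₁ x₁ = ∇ f₂ x₀) (h₁₂ : ∇ f₁ x₂ = ∇ f₂ x₁)
    {s : ℝ} (hs : 0 ≤ s) (hs₀ : s ≤ ‖x₀ - x₁‖) (hs₁ : s ≤ ‖x₁ - x₂‖) :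
    (μ₁ + μ₂ + (μ₁ - μ₂) ^ 2 / (L₂ - μ₂)) / 2 * s ^ 2
      ≤ (f₁ x₀ - f₂ x₀) - (f₁ x₁ - f₂ x₁) := by
  have hgap : 0 < L₂ - μ₂ := by linarith
  set a := ‖x₀ - x₁‖
  set T := ‖∇ f₂ x₁ - ∇ f₂ x₀ - μ₂ • (x₁ - x₀)‖
  have hdec := dca_step_decrease hf₁ hf₂ hcμ₁ hcμ₂ hcL₂ (by linarith) h₀₁
  have hpair := dca_two_step_bound hf₁ hcμ₁ hμ₂ h₀₁ h₁₂
  have hsT : μ₁ * s - μ₂ * a ≤ T := by nlinarith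
  have hsq := sq_mul_sq_le_of_mul_sub_mul_le hμ₂ hμ hμL.le hs hs₀ (norm_nonneg _) hsT
  calc (μ₁ + μ₂ + (μ₁ - μ₂) ^ 2 / (L₂ - μ₂)) / 2 * s ^ 2
        = (μ₁ + μ₂) / 2 * s ^ 2 + (μ₁ - μ₂) ^ 2 * s ^ 2 / (2 * (L₂ - μ₂)) := by field_simp
    _ ≤ (μ₁ + μ₂) / 2 * s ^ 2
          + ((μ₁ + μ₂) * (L₂ - μ₂) * (a ^ 2 - s ^ 2) + T ^ 2) / (2 * (L₂ - μ₂)) := by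
      gcongr
    _ = (μ₁ + μ₂) / 2 * a ^ 2 + T ^ 2 / (2 * (L₂ - μ₂)) := by
      field_simp
      ring
    _ ≤ (f₁ x₀ - f₂ x₀) - (f₁ x₁ - f₂ x₁) := hdec

end DCA

lemma nat_mul_le_sub_of_forall_le_sub {u : ℕ → ℝ} {c : ℝ} :
    ∀ {N : ℕ}, (∀ k < N, c ≤ u k - u (k + 1)) → N * c ≤ u 0 - u N
  | 0, _ => by simp
  | N + 1, h => by
    have := nat_mul_le_sub_of_forall_le_sub fun k hk => h k (Nat.lt_succ_of_lt hk)
    have := h N N.lt_succ_self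
    push_cast
    linarith

theorem stmt_14_general {d : ℕ} (f₁ f₂ : EuclideanSpace ℝ (Fin d) → ℝ) (μ₁ μ₂ L₂ : ℝ)
    (hf₁ : Differentiable ℝ f₁) (hf₂ : Differentiable ℝ f₂)
    (hL₂ : L₂ > μ₁) (hμ₁₂ : μ₁ ≥ μ₂) (hμ₂ : μ₂ ≥ 0) (hsum : μ₁ + μ₂ > 0)
    (hcμ₁ : ConvexOn ℝ univ (fun x => f₁ x - μ₁ / 2 * ‖x‖ ^ 2))
    (hcL₂ : ConvexOn ℝ univ (fun x => L₂ / 2 * ‖x‖ ^ 2 - f₂ x))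
    (hcμ₂ : ConvexOn ℝ univ (fun x => f₂ x - μ₂ / 2 * ‖x‖ ^ 2))
    (N : ℕ) (x : ℕ → EuclideanSpace ℝ (Fin d))
    (hDCA : ∀ k ≤ N, gradient f₁ (x (k + 1)) = gradient f₂ (x k)) :
    (1 / 2) * (⨅ k : Fin (N + 1), ‖x k.val - x (k.val + 1)‖ ^ 2) ≤
      ((f₁ (x 0) - f₂ (x 0)) - (f₁ (x (N + 1)) - f₂ (x (N + 1)))) /
        ((μ₁ + μ₂) + (μ₁ + μ₂ + (μ₁ - μ₂) ^ 2 / (L₂ - μ₂)) * N) := by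
  have hgap : 0 < L₂ - μ₂ := by linarith
  obtain ⟨j, hj⟩ := exists_eq_ciInf_of_finite (f := fun k : Fin (N + 1) => ‖x k - x (k + 1)‖ ^ 2)
  set s := ‖x j - x (j + 1)‖
  have hs : ∀ k ≤ N, s ≤ ‖x k - x (k + 1)‖ := fun k hk =>
    (pow_le_pow_iff_left₀ (norm_nonneg _) (norm_nonneg _) two_ne_zero).1
      (hj ▸ ciInf_le (Finite.bddBelow_range _) (⟨k, Nat.lt_succ_of_le hk⟩ : Fin (N + 1)))
  have hmid : ∀ k < N, (μ₁ + μ₂ + (μ₁ - μ₂) ^ 2 / (L₂ - μ₂)) / 2 * s ^ 2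
      ≤ (f₁ (x k) - f₂ (x k)) - (f₁ (x (k + 1)) - f₂ (x (k + 1))) := fun k hk =>
    dca_two_step_decrease hf₁ hf₂ hcμ₁ hcμ₂ hcL₂ hμ₂ hμ₁₂ hL₂ (hDCA k hk.le) (hDCA (k + 1) hk)
      (norm_nonneg _) (hs k hk.le) (hs (k + 1) hk)
  have hlast : (μ₁ + μ₂) / 2 * s ^ 2
      ≤ (f₁ (x N) - f₂ (x N)) - (f₁ (x (N + 1)) - f₂ (x (N + 1))) :=
    calc (μ₁ + μ₂) / 2 * s ^ 2 ≤ (μ₁ + μ₂) / 2 * ‖x N - x (N + 1)‖ ^ 2 := by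
          gcongr; exact hs N le_rfl
      _ ≤ _ := le_add_of_nonneg_right (by positivity)
      _ ≤ _ := dca_step_decrease hf₁ hf₂ hcμ₁ hcμ₂ hcL₂ (by linarith) (hDCA N le_rfl)
  have hfirst := nat_mul_le_sub_of_forall_le_sub (u := fun k => f₁ (x k) - f₂ (x k)) hmid
  have hden : 0 < (μ₁ + μ₂) + (μ₁ + μ₂ + (μ₁ - μ₂) ^ 2 / (L₂ - μ₂)) * N := by positivity
  rw [← hj, le_div_iff₀ hden]
  linear_combination hfirst + hlast

theorem stmt_14 {d : ℕ} (f₁ f₂ : EuclideanSpace ℝ (Fin d) → ℝ) (μ₁ L₁ μ₂ L₂ : ℝ)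
    (hf₁ : Differentiable ℝ f₁) (hf₂ : Differentiable ℝ f₂)
    (hL₂ : L₂ > μ₁) (hμ₁₂ : μ₁ ≥ μ₂) (hμ₂ : μ₂ ≥ 0) (hsum : μ₁ + μ₂ > 0) (h₁ : μ₁ < L₁)
    (hcL₁ : ConvexOn ℝ univ (fun x => L₁ / 2 * ‖x‖ ^ 2 - f₁ x))
    (hcμ₁ : ConvexOn ℝ univ (fun x => f₁ x - μ₁ / 2 * ‖x‖ ^ 2))
    (hcL₂ : ConvexOn ℝ univ (fun x => L₂ / 2 * ‖x‖ ^ 2 - f₂ x))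
    (hcμ₂ : ConvexOn ℝ univ (fun x => f₂ x - μ₂ / 2 * ‖x‖ ^ 2))
    (N : ℕ) (hN : N ≥ 1) (x : ℕ → EuclideanSpace ℝ (Fin d))
    (hDCA : ∀ k ≤ N, gradient f₁ (x (k + 1)) = gradient f₂ (x k)) :
    (1 / 2) * (⨅ k : Fin (N + 1), ‖x k.val - x (k.val + 1)‖ ^ 2) ≤
      ((f₁ (x 0) - f₂ (x 0)) - (f₁ (x (N + 1)) - f₂ (x (N + 1)))) /
        ((μ₁ + μ₂) + (μ₁ + μ₂ + (μ₁ - μ₂) ^ 2 / (L₂ - μ₂)) * N) :=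
  stmt_14_general f₁ f₂ μ₁ μ₂ L₂ hf₁ hf₂ hL₂ hμ₁₂ hμ₂ hsum hcμ₁ hcL₂ hcμ₂ N x hDCA
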